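/- arXiv:2310.09283 — 2 statements merged into one kernel-verified Lean document; each statement's English description precedes it below -/
import Mathlib

section
/- Let R be a noetherian ring, M a left R-module, and f an R-endomorphism of M. Then for any finitely generated R-submodule X of M, there exists a least non-negative integer η_f(X) such that for all m ≥ η_f(X), the restriction of f to f^m(X) gives an isomorphism f^m(X) → f^{m+1}(X). Moreover, for any R-submodule Y ⊆ X, η_f(Y) ≤ η_f(X). -/
/-!
Restrict `f` to the noetherian module `X`, giving `g`. The kernels of the powers of `g` form an
ascending chain, hence stabilize, so for large `m` the kernel of `g ^ m` meets the range of
`g ^ m` trivially; as `ker g ≤ ker (g ^ m)`, `g` is injective on the range of `g ^ m`, which is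
`f ^ m (X)`. The thresholds for `X` are also thresholds for any `Y ≤ X`, since
`f ^ m (Y) ⊆ f ^ m (X)`, so the least ones compare.
-/

open Filter

theorem Module.End.eventually_disjoint_range_pow_ker {R M : Type*} [Semiring R]
    [AddCommMonoid M] [Module R M] [IsNoetherian R M] (f : Module.End R M) :
    ∀ᶠ m in atTop, Disjoint (LinearMap.range (f ^ m)) (LinearMap.ker f) := by
  filter_upwards [f.eventually_disjoint_ker_pow_range_pow, eventually_ge_atTop 1] with m hm hm1
  obtain ⟨k, rfl⟩ := Nat.exists_eq_add_of_le' hm1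
  exact hm.symm.mono_right (by rw [pow_succ]; exact LinearMap.ker_le_ker_comp _ _)

theorem Module.End.eventually_injOn_map_pow {R M : Type*} [Ring R] [AddCommGroup M]
    [Module R M] (f : Module.End R M) {X : Submodule R M} [IsNoetherian R X]
    (hfX : X.map f ≤ X) : ∀ᶠ m in atTop, Set.InjOn f (X.map (f ^ m)) := by
  have hf : ∀ x ∈ X, f x ∈ X := fun x hx => hfX ⟨x, hx, rfl⟩
  set g : Module.End R X := f.restrict hf
  filter_upwards [g.eventually_disjoint_range_pow_ker] with m hm
  have hcomm : (f ^ m) ∘ₗ X.subtype = X.subtype ∘ₗ (g ^ m) := by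
    rw [Module.End.pow_restrict]
    rfl
  have himage : X.map (f ^ m) = (LinearMap.range (g ^ m)).map X.subtype := by
    rw [← LinearMap.range_comp, ← hcomm, LinearMap.range_comp, X.range_subtype]
  rw [himage, Submodule.map_coe]
  exact Set.InjOn.image_of_comp
    (X.injective_subtype.comp_injOn (LinearMap.disjoint_ker_iff_injOn.mp hm) :)

/-- **Fitting's Lemma (η-version).** Let `R` be a noetherian ring, `M` a left `R`-module and
`f` an `R`-endomorphism of `M`.  For any finitely generated `f`-invariant submodule `X` of `M`
there is a least natural number `η` such that for all `m ≥ η` the restriction of `f` to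
`f^m(X)` is an isomorphism `f^m(X) → f^{m+1}(X)` (equivalently, since `f` always maps
`f^m(X)` onto `f^{m+1}(X)`, `f` is injective on `f^m(X)`).  Moreover for any submodule
`Y ⊆ X` the corresponding least integer for `Y` is at most the one for `X`. -/
theorem fitting_eta (R M : Type*) [Ring R] [IsNoetherianRing R]
    [AddCommGroup M] [Module R M] (f : Module.End R M)
    (X : Submodule R M) (hX : X.FG) (hfX : X.map f ≤ X) :
    ∃ η : ℕ,
      IsLeast {n : ℕ | ∀ m, n ≤ m → Set.InjOn f (X.map (f ^ m) : Set M)} η ∧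
      ∀ Y : Submodule R M, Y ≤ X →
        ∃ ηY : ℕ,
          IsLeast {n : ℕ | ∀ m, n ≤ m → Set.InjOn f (Y.map (f ^ m) : Set M)} ηY ∧
          ηY ≤ η := by
  have : IsNoetherian R X := isNoetherian_of_fg_of_noetherian X hX
  set S := {n : ℕ | ∀ m, n ≤ m → Set.InjOn f (X.map (f ^ m) : Set M)}
  have hS : S.Nonempty := eventually_atTop.mp (f.eventually_injOn_map_pow hfX)
  refine ⟨sInf S, isLeast_csInf hS, fun Y hY => ?_⟩
  set T := {n : ℕ | ∀ m, n ≤ m → Set.InjOn f (Y.map (f ^ m) : Set M)}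
  have hST : S ⊆ T := fun n hn m hm => (hn m hm).mono (Submodule.map_mono hY)
  exact ⟨sInf T, isLeast_csInf (hS.mono hST), csInf_le_csInf (OrderBot.bddBelow T) hS hST⟩
end

section
/- Let G be a free abelian group, D a subgroup of G, and L an endomorphism of G with L(D) ⊆ D. Suppose k is a positive integer such that the restriction of L to L^k(D) is injective (as a map L^k(D) → D). Then for every finitely generated subgroup X of G that is L-invariant, η_L(X) ≤ η_{L̄}(X̄) + k, where L̄ : G/D → G/D is the induced endomorphism, X̄ = (X + D)/D, and η denotes the least n such that L restricted to L^m(·) is injective for all m ≥ n. -/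
/-- **Lemma 3.3 of [BLMV].** Let `G` be a free abelian group, `D ≤ G` a subgroup,
`L ∈ End_ℤ(G)` with `L(D) ⊆ D`, and let `k > 0` be such that `L` restricted to `L^k(D)` is
injective (as a map `L^k(D) → D`).  Then for every finitely generated `L`-invariant subgroup
`X ≤ G` we have `η_L(X) ≤ η_{L̄}(X̄) + k`, where `L̄ : G/D → G/D` is the induced
endomorphism, `X̄ = (X + D)/D` is the image of `X` in `G/D`, and `η` of a subgroup denotes
the least `n` such that `L` is injective on `L^m(⋅)` for every `m ≥ n`. -/
theorem group_fitting_bound (G : Type*) [AddCommGroup G] [Module.Free ℤ G]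
    (D : AddSubgroup G) (L : AddMonoid.End G) (hLD : D.map L ≤ D)
    (k : ℕ) (hk : 0 < k)
    (hinj : Set.InjOn L (D.map (L ^ k) : Set G))
    (X : AddSubgroup G) (hX : X.FG) (hLX : X.map L ≤ X)
    (Lbar : AddMonoid.End (G ⧸ D))
    (hLbar : ∀ g : G, Lbar (QuotientAddGroup.mk' D g) = QuotientAddGroup.mk' D (L g))
    (ηbar : ℕ)
    (hηbar : IsLeast {n : ℕ | ∀ m, n ≤ m →
        Set.InjOn Lbar (((X.map (QuotientAddGroup.mk' D)).map (Lbar ^ m)) : Set (G ⧸ D))} ηbar) :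
    ∃ η : ℕ,
      IsLeast {n : ℕ | ∀ m, n ≤ m → Set.InjOn L (X.map (L ^ m) : Set G)} η ∧
      η ≤ ηbar + k := by
  classical
  -- powers of Lbar compute as powers of L on representatives
  have key : ∀ (n : ℕ) (g : G),
      (Lbar ^ n) (QuotientAddGroup.mk' D g) = QuotientAddGroup.mk' D ((L ^ n) g) := by
    intro n
    induction n with
    | zero => intro g; rfl
    | succ n ih =>
      intro g
      have h1 : (Lbar ^ (n + 1)) (QuotientAddGroup.mk' D g)
          = Lbar ((Lbar ^ n) (QuotientAddGroup.mk' D g)) := by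
        rw [pow_succ']; rfl
      have h2 : (L ^ (n + 1)) g = L ((L ^ n) g) := by rw [pow_succ']; rfl
      rw [h1, ih, hLbar, h2]
  -- the key claim: ηbar + k belongs to the set
  have hmem : (ηbar + k) ∈ {n : ℕ | ∀ m, n ≤ m → Set.InjOn L (X.map (L ^ m) : Set G)} := by
    intro m hm
    intro x hx y hy hxy
    have hz : x - y ∈ X.map (L ^ m) := AddSubgroup.sub_mem _ hx hy
    obtain ⟨w, hw, hwz⟩ := hz
    have hLz : L (x - y) = 0 := by rw [map_sub, hxy, sub_self]
    set u : G := (L ^ (m - k)) w with hu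
    have hmk : k + (m - k) = m := by omega
    have hku : (L ^ k) u = x - y := by
      rw [hu, ← hwz]
      calc (L ^ k) ((L ^ (m - k)) w) = (L ^ (k + (m - k))) w := by rw [pow_add]; rfl
        _ = (L ^ m) w := by rw [hmk]
    -- membership of iterates in the quotient images
    have hmemj : ∀ j : ℕ, (Lbar ^ j) (QuotientAddGroup.mk' D u)
        ∈ (X.map (QuotientAddGroup.mk' D)).map (Lbar ^ (m - k + j)) := by
      intro j
      refine ⟨QuotientAddGroup.mk' D w, ⟨w, hw, rfl⟩, ?_⟩
      rw [key]
      show (Lbar ^ (m - k + j)) (QuotientAddGroup.mk' D w) = QuotientAddGroup.mk' D ((L ^ j) u)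
      rw [key, hu]
      have hjk : j + (m - k) = m - k + j := by omega
      congr 1
      calc (L ^ (m - k + j)) w = (L ^ (j + (m - k))) w := by rw [hjk]
        _ = (L ^ j) ((L ^ (m - k)) w) := by rw [pow_add]; rfl
    -- base case : Lbar^(k+1) ū = 0
    have hbase : (Lbar ^ (k + 1)) (QuotientAddGroup.mk' D u) = 0 := by
      rw [key]
      have h2 : (L ^ (k + 1)) u = L ((L ^ k) u) := by rw [pow_succ']; rfl
      rw [h2, hku, hLz, map_zero]
    -- downward step
    have hstep : ∀ j : ℕ, (Lbar ^ (j + 1)) (QuotientAddGroup.mk' D u) = 0 →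
        (Lbar ^ j) (QuotientAddGroup.mk' D u) = 0 := by
      intro j h1
      have hj : ηbar ≤ m - k + j := by omega
      have hinj' := hηbar.1 (m - k + j) hj
      refine hinj' (hmemj j) (AddSubgroup.zero_mem _) ?_
      have : Lbar ((Lbar ^ j) (QuotientAddGroup.mk' D u))
          = (Lbar ^ (j + 1)) (QuotientAddGroup.mk' D u) := by rw [pow_succ']; rfl
      rw [this, h1, map_zero]
    -- conclude ū = 0
    have hP : ∀ i : ℕ, i ≤ k + 1 → (Lbar ^ (k + 1 - i)) (QuotientAddGroup.mk' D u) = 0 := by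
      intro i
      induction i with
      | zero => intro _; simpa using hbase
      | succ i ih =>
        intro hi
        have h1 := ih (by omega)
        have heq : k + 1 - i = (k + 1 - (i + 1)) + 1 := by omega
        rw [heq] at h1
        exact hstep _ h1
    have hu0 : QuotientAddGroup.mk' D u = 0 := by
      have := hP (k + 1) le_rfl
      simpa using this
    have huD : u ∈ D := by
      rwa [QuotientAddGroup.mk'_apply, QuotientAddGroup.eq_zero_iff] at hu0
    -- now x - y ∈ L^k(D), and L(x-y) = 0 = L 0
    have hzD : x - y ∈ (D.map (L ^ k) : Set G) := ⟨u, huD, hku⟩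
    have h0D : (0 : G) ∈ (D.map (L ^ k) : Set G) := AddSubgroup.zero_mem _
    have := hinj hzD h0D (by rw [hLz, map_zero])
    exact sub_eq_zero.mp this
  have hne : ∃ n, n ∈ {n : ℕ | ∀ m, n ≤ m → Set.InjOn L (X.map (L ^ m) : Set G)} :=
    ⟨ηbar + k, hmem⟩
  exact ⟨Nat.find hne, ⟨Nat.find_spec hne, fun n hn => Nat.find_le hn⟩, Nat.find_le hmem⟩
end
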